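/- Let C ≥ 2 be a real number and let G be a finite simple graph on n ≥ 3 vertices satisfying λ₂(G) > (1 − 1/C)·λ_n(G). Then G is a C-expander; that is: (a) |N(X)| ≥ C|X| for every subset X ⊆ V(G) with |X| < n/(2C), and (b) e(X, Y) ≥ 1 for any two disjoint subsets X, Y ⊆ V(G) with |X|, |Y| ≥ n/(2C). -/

import Mathlib

open Matrix SimpleGraph

attribute [local instance] Classical.propDecidable

/-- Eigenvalues of a real square matrix, sorted in non-decreasing order
(junk value `0` if the matrix is not Hermitian). -/
noncomputable def sortedEigs {n : ℕ} (A : Matrix (Fin n) (Fin n) ℝ) : Fin n → ℝ :=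
  if h : A.IsHermitian then h.eigenvalues ∘ Tuple.sort h.eigenvalues else 0

/-- `lapEig G i` is the `i`-th smallest Laplacian eigenvalue of `G` (1-based indexing),
so `lapEig G 2 = λ₂(G)` and `lapEig G n = λₙ(G)`; junk value `0` if `i` is out of range. -/
noncomputable def lapEig {n : ℕ} (G : SimpleGraph (Fin n)) (i : ℕ) : ℝ :=
  if h : i - 1 < n then sortedEigs (G.lapMatrix ℝ) ⟨i - 1, h⟩ else 0

/-- `adjEig G i` is the `i`-th largest adjacency eigenvalue of `G` (1-based indexing),
so `adjEig G 1 = μ₁(G)` and `adjEig G n = μₙ(G)`; junk value `0` if `i` is out of range. -/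
noncomputable def adjEig {n : ℕ} (G : SimpleGraph (Fin n)) (i : ℕ) : ℝ :=
  if h : n - i < n then sortedEigs (G.adjMatrix ℝ) ⟨n - i, h⟩ else 0

/-! If no edge joins the disjoint sets `X` and `Y`, the centred vectors `1_Y ± t • 1_X` have the
same Laplacian energy, so `λ₂ ‖f₋‖² ≤ λₙ ‖f₊‖²` for every `t`. As a quadratic inequality in `t`
this has nonpositive discriminant, which reads
`|X| |Y| (λₙ + λ₂)² ≤ (n - |X|) (n - |Y|) (λₙ - λ₂)²`; the spectral gap hypothesis turns it into
`(2C - 1)² |X| |Y| < (n - |X|) (n - |Y|)`. Part (b) is this bound for two large sets, part (a) is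
it for `X` and the complement of `X ∪ N(X)`. -/

namespace Matrix.IsHermitian

variable {ι : Type*} [Fintype ι] [DecidableEq ι] {A : Matrix ι ι ℝ} (hA : A.IsHermitian)

lemma dotProduct_eq_sum_eigenvectorBasis_repr (f g : ι → ℝ) :
    f ⬝ᵥ g = ∑ i, hA.eigenvectorBasis.repr (WithLp.toLp 2 f) i *
      hA.eigenvectorBasis.repr (WithLp.toLp 2 g) i := by
  have hfg : f ⬝ᵥ g = inner ℝ (WithLp.toLp 2 f) (WithLp.toLp 2 g) := by
    simp [PiLp.inner_apply, dotProduct, mul_comm]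
  rw [hfg, ← hA.eigenvectorBasis.sum_inner_mul_inner]
  simp [OrthonormalBasis.repr_apply_apply, real_inner_comm]

lemma eigenvectorBasis_repr_mulVec (f : ι → ℝ) (i : ι) :
    hA.eigenvectorBasis.repr (WithLp.toLp 2 (A *ᵥ f)) i =
      hA.eigenvalues i * hA.eigenvectorBasis.repr (WithLp.toLp 2 f) i := by
  have hAf : WithLp.toLp 2 (A *ᵥ f) = toEuclideanLin A (WithLp.toLp 2 f) := rfl
  have hAb : toEuclideanLin A (hA.eigenvectorBasis i) =
      hA.eigenvalues i • hA.eigenvectorBasis i := by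
    ext j
    simpa using congrFun (hA.mulVec_eigenvectorBasis i) j
  rw [OrthonormalBasis.repr_apply_apply, OrthonormalBasis.repr_apply_apply, hAf,
    ← isSymmetric_toEuclideanLin_iff.mpr hA, hAb, real_inner_smul_left]

lemma dotProduct_self_eq_sum_sq (f : ι → ℝ) :
    f ⬝ᵥ f = ∑ i, hA.eigenvectorBasis.repr (WithLp.toLp 2 f) i ^ 2 := by
  simp_rw [hA.dotProduct_eq_sum_eigenvectorBasis_repr f f, sq]

lemma dotProduct_mulVec_eq_sum (f : ι → ℝ) :
    f ⬝ᵥ (A *ᵥ f) = ∑ i, hA.eigenvalues i * hA.eigenvectorBasis.repr (WithLp.toLp 2 f) i ^ 2 := by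
  simp_rw [hA.dotProduct_eq_sum_eigenvectorBasis_repr f, eigenvectorBasis_repr_mulVec]
  exact Finset.sum_congr rfl fun i _ => by ring

end Matrix.IsHermitian

section SortedEigs

variable {n : ℕ} {A : Matrix (Fin n) (Fin n) ℝ}

lemma Matrix.IsHermitian.sortedEigs_eq (hA : A.IsHermitian) :
    sortedEigs A = hA.eigenvalues ∘ Tuple.sort hA.eigenvalues := by
  rw [sortedEigs, dif_pos hA]

lemma Matrix.IsHermitian.monotone_sortedEigs (hA : A.IsHermitian) : Monotone (sortedEigs A) :=
  hA.sortedEigs_eq ▸ Tuple.monotone_sort _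

lemma Matrix.IsHermitian.eigenvalues_eq_sortedEigs (hA : A.IsHermitian) (i : Fin n) :
    hA.eigenvalues i = sortedEigs A ((Tuple.sort hA.eigenvalues).symm i) := by
  simp [hA.sortedEigs_eq]

lemma Matrix.IsHermitian.dotProduct_mulVec_le_sortedEigs_mul (hA : A.IsHermitian) (h : n - 1 < n)
    (f : Fin n → ℝ) : f ⬝ᵥ (A *ᵥ f) ≤ sortedEigs A ⟨n - 1, h⟩ * (f ⬝ᵥ f) := by
  rw [hA.dotProduct_mulVec_eq_sum, hA.dotProduct_self_eq_sum_sq, Finset.mul_sum]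
  gcongr with i
  rw [hA.eigenvalues_eq_sortedEigs]
  exact hA.monotone_sortedEigs (Fin.le_def.2 (by simp; omega))

lemma Matrix.PosSemidef.sortedEigs_mul_le_dotProduct_mulVec (hA : A.PosSemidef) (h : 1 < n)
    {u : Fin n → ℝ} (hu : u ≠ 0) (hAu : A *ᵥ u = 0) {f : Fin n → ℝ} (hf : u ⬝ᵥ f = 0) :
    sortedEigs A ⟨1, h⟩ * (f ⬝ᵥ f) ≤ f ⬝ᵥ (A *ᵥ f) := by
  set μ := sortedEigs A ⟨1, h⟩
  rcases le_or_gt μ 0 with hμ | hμ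
  · have hQ : 0 ≤ f ⬝ᵥ (A *ᵥ f) := by simpa using hA.dotProduct_mulVec_nonneg f
    have hff : 0 ≤ f ⬝ᵥ f := by rw [hA.1.dotProduct_self_eq_sum_sq]; positivity
    exact (mul_nonpos_of_nonpos_of_nonneg hμ hff).trans hQ
  set e := hA.1.eigenvectorBasis.repr
  set i₀ := Tuple.sort hA.1.eigenvalues ⟨0, by omega⟩
  have hμle : ∀ i ≠ i₀, μ ≤ hA.1.eigenvalues i := fun i hi => by
    rw [hA.1.eigenvalues_eq_sortedEigs]
    refine hA.1.monotone_sortedEigs (Fin.le_def.2 ?_)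
    have : (Tuple.sort hA.1.eigenvalues).symm i ≠ ⟨0, by omega⟩ :=
      fun h0 => hi ((Equiv.symm_apply_eq _).mp h0)
    simp only [ne_eq, Fin.ext_iff] at this ⊢
    omega
  -- as `μ > 0`, the kernel vector `u` is a multiple of the bottom eigenvector
  have hu_supp : ∀ i ≠ i₀, e (WithLp.toLp 2 u) i = 0 := fun i hi => by
    have := hA.1.eigenvectorBasis_repr_mulVec u i
    rw [hAu] at this
    have hpos : hA.1.eigenvalues i ≠ 0 := (hμ.trans_le (hμle i hi)).ne'
    simpa [e, hpos] using this.symm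
  have hu₀ : e (WithLp.toLp 2 u) i₀ ≠ 0 := by
    intro h0
    have he : e (WithLp.toLp 2 u) = 0 := by
      ext i
      by_cases hi : i = i₀
      · subst hi; simpa using h0
      · simpa using hu_supp i hi
    exact hu (by simpa using congrArg WithLp.ofLp (e.map_eq_zero_iff.mp he))
  have hf₀ : e (WithLp.toLp 2 f) i₀ = 0 := by
    rw [hA.1.dotProduct_eq_sum_eigenvectorBasis_repr,
      Finset.sum_eq_single i₀ (fun i _ hi => by simp [e, hu_supp i hi]) (by simp)] at hf
    exact (mul_eq_zero.mp hf).resolve_left hu₀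
  rw [hA.1.dotProduct_mulVec_eq_sum, hA.1.dotProduct_self_eq_sum_sq, Finset.mul_sum]
  refine Finset.sum_le_sum fun i _ => ?_
  by_cases hi : i = i₀
  · simp [hi, e, hf₀]
  · exact mul_le_mul_of_nonneg_right (hμle i hi) (sq_nonneg _)

end SortedEigs

lemma dotProduct_sub_mean_self {ι : Type*} [Fintype ι] (f : ι → ℝ) :
    (f - fun _ => (∑ i, f i) / Fintype.card ι) ⬝ᵥ (f - fun _ => (∑ i, f i) / Fintype.card ι) =
      f ⬝ᵥ f - (∑ i, f i) ^ 2 / Fintype.card ι := by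
  rcases isEmpty_or_nonempty ι with hι | hι
  · simp
  have hcard : (Fintype.card ι : ℝ) ≠ 0 := by positivity
  simp only [dotProduct, Pi.sub_apply, sub_mul, mul_sub, Finset.sum_sub_distrib,
    ← Finset.sum_mul, ← Finset.mul_sum, Finset.sum_const, Finset.card_univ, nsmul_eq_mul]
  field_simp
  ring

lemma sum_sub_mean {ι : Type*} [Fintype ι] [Nonempty ι] (f : ι → ℝ) :
    ∑ i, (f i - (∑ j, f j) / Fintype.card ι) = 0 := by
  have hcard : (Fintype.card ι : ℝ) ≠ 0 := by positivity
  simp [Finset.sum_sub_distrib, mul_div_cancel₀ _ hcard]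

namespace SimpleGraph

variable {V : Type*} [Fintype V] [DecidableEq V] (G : SimpleGraph V) [DecidableRel G.Adj]

lemma dotProduct_lapMatrix_mulVec (f : V → ℝ) :
    f ⬝ᵥ (G.lapMatrix ℝ *ᵥ f) = (∑ i, ∑ j, if G.Adj i j then (f i - f j) ^ 2 else 0) / 2 := by
  rw [← toLinearMap₂'_apply', lapMatrix_toLinearMap₂']

lemma dotProduct_lapMatrix_mulVec_sub_const (f : V → ℝ) (c : ℝ) :
    (f - fun _ => c) ⬝ᵥ (G.lapMatrix ℝ *ᵥ (f - fun _ => c)) = f ⬝ᵥ (G.lapMatrix ℝ *ᵥ f) := by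
  simp only [dotProduct_lapMatrix_mulVec, Pi.sub_apply, sub_sub_sub_cancel_right]

lemma dotProduct_lapMatrix_mulVec_add_eq_sub {f g : V → ℝ}
    (hfg : ∀ i j, G.Adj i j → (f i - f j) * (g i - g j) = 0) :
    (f + g) ⬝ᵥ (G.lapMatrix ℝ *ᵥ (f + g)) = (f - g) ⬝ᵥ (G.lapMatrix ℝ *ᵥ (f - g)) := by
  simp only [dotProduct_lapMatrix_mulVec]
  congr 1
  refine Finset.sum_congr rfl fun i _ => Finset.sum_congr rfl fun j _ => ?_
  split_ifs with hij
  · simp only [Pi.add_apply, Pi.sub_apply]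
    linear_combination 4 * hfg i j hij
  · rfl

end SimpleGraph

section LapEig

variable {n : ℕ} (G : SimpleGraph (Fin n))

lemma lapEig_nonneg (i : ℕ) : 0 ≤ lapEig G i := by
  have hL := posSemidef_lapMatrix ℝ G
  unfold lapEig
  split_ifs
  · rw [hL.1.sortedEigs_eq]
    exact hL.eigenvalues_nonneg _
  · rfl

lemma lapEig_two_le (hn : 2 ≤ n) : lapEig G 2 ≤ lapEig G n := by
  rw [lapEig, lapEig, dif_pos (by omega), dif_pos (by omega)]
  exact (isHermitian_lapMatrix ℝ G).monotone_sortedEigs (Fin.le_def.2 (by simp; omega))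

lemma lapEig_two_mul_le_dotProduct_lapMatrix_mulVec (hn : 2 ≤ n) (f : Fin n → ℝ) :
    lapEig G 2 * (f ⬝ᵥ f - (∑ v, f v) ^ 2 / n) ≤ f ⬝ᵥ (G.lapMatrix ℝ *ᵥ f) := by
  have : Nonempty (Fin n) := ⟨⟨0, by omega⟩⟩
  have hone : (fun _ => 1 : Fin n → ℝ) ≠ 0 := fun h => by simpa using congrFun h ⟨0, by omega⟩
  have h := (posSemidef_lapMatrix ℝ G).sortedEigs_mul_le_dotProduct_mulVec (by omega) hone
    (lapMatrix_mulVec_const_eq_zero G) (f := f - fun _ => (∑ v, f v) / Fintype.card (Fin n))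
    (by simpa [dotProduct] using sum_sub_mean f)
  rw [dotProduct_sub_mean_self, G.dotProduct_lapMatrix_mulVec_sub_const] at h
  simpa [lapEig, show 2 - 1 < n by omega] using h

lemma dotProduct_lapMatrix_mulVec_le_lapEig_mul (hn : 0 < n) (f : Fin n → ℝ) :
    f ⬝ᵥ (G.lapMatrix ℝ *ᵥ f) ≤ lapEig G n * (f ⬝ᵥ f - (∑ v, f v) ^ 2 / n) := by
  have h := (isHermitian_lapMatrix ℝ G).dotProduct_mulVec_le_sortedEigs_mul (by omega)
    (f - fun _ => (∑ v, f v) / Fintype.card (Fin n))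
  rw [dotProduct_sub_mean_self, G.dotProduct_lapMatrix_mulVec_sub_const] at h
  simpa [lapEig, show n - 1 < n by omega] using h

end LapEig

lemma SimpleGraph.ite_sub_ite_mul_ite_sub_ite_eq_zero {V : Type*} [DecidableEq V]
    (G : SimpleGraph V) {X Y : Finset V} (hXY : Disjoint X Y) (hno : ∀ u ∈ X, ∀ w ∈ Y, ¬ G.Adj u w) (t : ℝ)
    {i j : V} (hij : G.Adj i j) :
    ((if i ∈ Y then 1 else 0) - if j ∈ Y then 1 else 0) *
      ((if i ∈ X then t else 0) - if j ∈ X then t else 0) = 0 := by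
  by_cases hi : i ∈ X <;> by_cases hj : j ∈ X
  · simp [hi, hj]
  · have hiY : i ∉ Y := Finset.disjoint_left.mp hXY hi
    have hjY : j ∉ Y := fun hjY => hno i hi j hjY hij
    simp [hiY, hjY]
  · have hiY : i ∉ Y := fun hiY => hno j hj i hiY hij.symm
    have hjY : j ∉ Y := Finset.disjoint_left.mp hXY hj
    simp [hiY, hjY]
  · simp [hi, hj]

lemma two_mul_le_of_forall_not_adj {n : ℕ} (hn : 2 ≤ n) (G : SimpleGraph (Fin n))
    {X Y : Finset (Fin n)} (hXY : Disjoint X Y) (hno : ∀ u ∈ X, ∀ w ∈ Y, ¬ G.Adj u w) (t : ℝ) :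
    2 * t * (X.card * Y.card * (lapEig G n + lapEig G 2)) ≤
      (lapEig G n - lapEig G 2) * (t ^ 2 * (X.card * (n - X.card)) + Y.card * (n - Y.card)) := by
  set a : ℝ := (X.card : ℝ)
  set b : ℝ := (Y.card : ℝ)
  set f : Fin n → ℝ := fun v => if v ∈ X then t else 0
  set g : Fin n → ℝ := fun v => if v ∈ Y then 1 else 0
  have hfg : f ⬝ᵥ g = 0 := by
    simpa [f, g, dotProduct] using Or.inl (Finset.disjoint_iff_inter_eq_empty.mp hXY.symm)
  have hff : f ⬝ᵥ f = t ^ 2 * a := by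
    simp [f, dotProduct, a]
    ring
  have hgg : g ⬝ᵥ g = b := by simp [g, dotProduct, b]
  have hsum : ∀ s : ℝ, ∑ v, (g + s • f) v = b + s * t * a := fun s => by
    simp [f, g, Finset.sum_add_distrib, Finset.sum_ite_mem, a, b]
    ring
  have hnorm : ∀ s : ℝ, (g + s • f) ⬝ᵥ (g + s • f) = b + s ^ 2 * t ^ 2 * a := fun s => by
    simp only [add_dotProduct, dotProduct_add, smul_dotProduct, dotProduct_smul, hfg, hff, hgg,
      dotProduct_comm g f, smul_eq_mul]
    ring
  have hQ : (g + (-1 : ℝ) • f) ⬝ᵥ (G.lapMatrix ℝ *ᵥ (g + (-1 : ℝ) • f)) =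
      (g + (1 : ℝ) • f) ⬝ᵥ (G.lapMatrix ℝ *ᵥ (g + (1 : ℝ) • f)) := by
    rw [neg_one_smul, one_smul, ← sub_eq_add_neg]
    exact (G.dotProduct_lapMatrix_mulVec_add_eq_sub fun i j hij =>
      G.ite_sub_ite_mul_ite_sub_ite_eq_zero hXY hno t hij).symm
  have h := (hQ ▸ lapEig_two_mul_le_dotProduct_lapMatrix_mulVec G hn (g + (-1 : ℝ) • f)).trans
    (dotProduct_lapMatrix_mulVec_le_lapEig_mul G (by omega) (g + (1 : ℝ) • f))
  rw [hsum, hsum, hnorm, hnorm] at h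
  field_simp at h
  linear_combination h

theorem card_mul_card_mul_sq_le {n : ℕ} (hn : 2 ≤ n) (G : SimpleGraph (Fin n))
    {X Y : Finset (Fin n)} (hXY : Disjoint X Y) (hX : X.Nonempty) (hY : Y.Nonempty)
    (hno : ∀ u ∈ X, ∀ w ∈ Y, ¬ G.Adj u w) :
    (X.card * Y.card : ℝ) * (lapEig G n + lapEig G 2) ^ 2 ≤
      (n - X.card) * (n - Y.card) * (lapEig G n - lapEig G 2) ^ 2 := by
  set a : ℝ := (X.card : ℝ)
  set b : ℝ := (Y.card : ℝ)
  set l₂ := lapEig G 2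
  set lₙ := lapEig G n
  have hdisc := discrim_le_zero (a := (lₙ - l₂) * (a * (n - a))) (b := -2 * (a * b * (lₙ + l₂)))
    (c := (lₙ - l₂) * (b * (n - b)))
    fun t => by linarith [two_mul_le_of_forall_not_adj hn G hXY hno t]
  refine le_of_mul_le_mul_left ?_ (by positivity : 0 < a * b)
  rw [discrim] at hdisc
  linear_combination hdisc / 4

section Expansion

variable {n : ℕ} (G : SimpleGraph (Fin n)) {C : ℝ}

theorem sq_two_mul_sub_one_mul_card_mul_card_lt (hn : 2 ≤ n) (hC : 1 / 2 ≤ C)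
    (hratio : lapEig G 2 > (1 - 1 / C) * lapEig G n)
    {X Y : Finset (Fin n)} (hXY : Disjoint X Y) (hX : X.Nonempty) (hY : Y.Nonempty)
    (hno : ∀ u ∈ X, ∀ w ∈ Y, ¬ G.Adj u w) :
    (2 * C - 1) ^ 2 * X.card * Y.card < (n - X.card) * (n - Y.card) := by
  set a : ℝ := (X.card : ℝ)
  set b : ℝ := (Y.card : ℝ)
  set l₂ := lapEig G 2
  set lₙ := lapEig G n
  have hl₂ : 0 ≤ l₂ := lapEig_nonneg G 2
  have hl₂ₙ : l₂ ≤ lₙ := lapEig_two_le G hn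
  have hpos : 0 < lₙ + l₂ := by
    by_contra! h
    rw [show lₙ = 0 by linarith, mul_zero] at hratio
    linarith
  have hgap : (2 * C - 1) * (lₙ - l₂) < lₙ + l₂ := by
    have h := mul_lt_mul_of_pos_left hratio (by linarith : 0 < C)
    rw [← mul_assoc, mul_one_sub, mul_one_div_cancel (by linarith)] at h
    linarith
  have hsq : ((2 * C - 1) * (lₙ - l₂)) ^ 2 < (lₙ + l₂) ^ 2 :=
    pow_lt_pow_left₀ hgap (by nlinarith) two_ne_zero
  have hab : a + b ≤ n := by
    have := Finset.card_le_univ (X ∪ Y)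
    rw [Finset.card_union_of_disjoint hXY, Fintype.card_fin] at this
    simpa [a, b] using (Nat.cast_le (α := ℝ)).2 this
  have ha : 1 ≤ a := by simpa [a] using hX.card_pos
  have hb : 1 ≤ b := by simpa [b] using hY.card_pos
  refine lt_of_mul_lt_mul_right ?_ (sq_nonneg (lₙ + l₂))
  calc (2 * C - 1) ^ 2 * a * b * (lₙ + l₂) ^ 2
      = (2 * C - 1) ^ 2 * (a * b * (lₙ + l₂) ^ 2) := by ring
    _ ≤ (2 * C - 1) ^ 2 * ((n - a) * (n - b) * (lₙ - l₂) ^ 2) :=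
        mul_le_mul_of_nonneg_left (card_mul_card_mul_sq_le hn G hXY hX hY hno) (sq_nonneg _)
    _ = (n - a) * (n - b) * ((2 * C - 1) * (lₙ - l₂)) ^ 2 := by ring
    _ < (n - a) * (n - b) * (lₙ + l₂) ^ 2 :=
        mul_lt_mul_of_pos_left hsq (mul_pos (by linarith) (by linarith))

theorem mul_card_le_card_neighborhood (hn : 2 ≤ n) (hC : 2 ≤ C)
    (hratio : lapEig G 2 > (1 - 1 / C) * lapEig G n)
    (X : Finset (Fin n)) (hX : (X.card : ℝ) < n / (2 * C)) :
    C * X.card ≤ (Finset.univ.filter fun w => w ∉ X ∧ ∃ u ∈ X, G.Adj u w).card := by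
  rcases X.eq_empty_or_nonempty with rfl | hXne
  · simp
  by_contra! hlt
  set Nb := Finset.univ.filter fun w => w ∉ X ∧ ∃ u ∈ X, G.Adj u w
  set Y := Finset.univ \ (X ∪ Nb)
  have hXNb : Disjoint X Nb :=
    Finset.disjoint_left.2 fun _ hw hwN => (Finset.mem_filter.1 hwN).2.1 hw
  have hXY : Disjoint X Y :=
    Finset.disjoint_left.2 fun _ hw hwY => (Finset.mem_sdiff.1 hwY).2 (Finset.mem_union_left _ hw)
  have hno : ∀ u ∈ X, ∀ w ∈ Y, ¬ G.Adj u w := fun u hu w hwY huw =>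
    have hwXNb := (Finset.mem_sdiff.1 hwY).2
    hwXNb <| Finset.mem_union_right _ <| Finset.mem_filter.2
      ⟨Finset.mem_univ w, fun hwX => hwXNb (Finset.mem_union_left _ hwX), u, hu, huw⟩
  set a : ℝ := (X.card : ℝ)
  set m : ℝ := (Nb.card : ℝ)
  have hY : (Y.card : ℝ) = n - a - m := by
    rw [Finset.card_sdiff_of_subset (Finset.subset_univ _), Finset.card_univ, Fintype.card_fin,
      Finset.card_union_of_disjoint hXNb, Nat.cast_sub, Nat.cast_add]
    · ring
    · simpa [Finset.card_union_of_disjoint hXNb] using Finset.card_le_univ (X ∪ Nb)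
  have ha : 1 ≤ a := by simpa [a] using hXne.card_pos
  have hXn : 2 * C * a < n := by rwa [lt_div_iff₀ (by positivity), mul_comm] at hX
  have hYne : Y.Nonempty := by
    rw [← Finset.card_pos, ← Nat.cast_pos (α := ℝ), hY]
    nlinarith
  have hmix := sq_two_mul_sub_one_mul_card_mul_card_lt G hn (by linarith) hratio hXY hXne hYne hno
  rw [hY] at hmix
  change (2 * C - 1) ^ 2 * a * (n - a - m) < (n - a) * (n - (n - a - m)) at hmix
  have h4C : 0 ≤ 4 * C ^ 2 - 5 * C := by nlinarith
  linarith [mul_pos (sub_pos.2 hlt) (by nlinarith : 0 < (2 * C - 1) ^ 2 * a + n - a),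
    mul_nonneg (by linarith : 0 ≤ a) (mul_nonneg (sub_nonneg.2 hXn.le) h4C),
    mul_nonneg (by linarith : 0 ≤ a) (mul_nonneg (by linarith : 0 ≤ a)
      (mul_nonneg (mul_nonneg (by linarith) (by linarith)) (sub_nonneg.2 hC) :
        0 ≤ 2 * C * (2 * C - 1) * (C - 2)))]

theorem exists_adj_of_le_card (hn : 2 ≤ n) (hC : 1 / 2 ≤ C)
    (hratio : lapEig G 2 > (1 - 1 / C) * lapEig G n)
    {X Y : Finset (Fin n)} (hXY : Disjoint X Y)
    (hX : n / (2 * C) ≤ (X.card : ℝ)) (hY : n / (2 * C) ≤ (Y.card : ℝ)) :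
    ∃ u ∈ X, ∃ w ∈ Y, G.Adj u w := by
  by_contra! hno
  have hC0 : 0 < 2 * C := by linarith
  have hn0 : (0 : ℝ) < n / (2 * C) := by positivity
  have hXne : X.Nonempty := by rw [← Finset.card_pos, ← Nat.cast_pos (α := ℝ)]; linarith
  have hYne : Y.Nonempty := by rw [← Finset.card_pos, ← Nat.cast_pos (α := ℝ)]; linarith
  have hmix := sq_two_mul_sub_one_mul_card_mul_card_lt G hn hC hratio hXY hXne hYne hno
  have hXn : (X.card : ℝ) ≤ n := by simpa using Finset.card_le_univ X
  have hYn : (Y.card : ℝ) ≤ n := by simpa using Finset.card_le_univ Y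
  rw [div_le_iff₀ hC0] at hX hY
  nlinarith [mul_le_mul (by linarith : (n : ℝ) - X.card ≤ (2 * C - 1) * X.card)
    (by linarith : (n : ℝ) - Y.card ≤ (2 * C - 1) * Y.card) (by linarith) (by linarith)]

end Expansion

/-- Let `C ≥ 2` and let `G` be a graph on `n ≥ 3` vertices with
`λ₂(G) > (1 - 1/C)·λₙ(G)`. Then `G` is a `C`-expander:
(a) `|N(X)| ≥ C|X|` whenever `|X| < n/(2C)`, where `N(X)` is the external
neighbourhood of `X`; and
(b) any two disjoint sets `X, Y` with `|X|, |Y| ≥ n/(2C)` are joined by an edge. -/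
theorem stmt18 {n : ℕ} (hn : 3 ≤ n) (C : ℝ) (hC : 2 ≤ C)
    (G : SimpleGraph (Fin n))
    (hratio : lapEig G 2 > (1 - 1 / C) * lapEig G n) :
    (∀ X : Finset (Fin n), (X.card : ℝ) < (n : ℝ) / (2 * C) →
      C * (X.card : ℝ) ≤
        ((Finset.univ.filter (fun w => w ∉ X ∧ ∃ u ∈ X, G.Adj u w)).card : ℝ)) ∧
    (∀ X Y : Finset (Fin n), Disjoint X Y →
      (n : ℝ) / (2 * C) ≤ (X.card : ℝ) → (n : ℝ) / (2 * C) ≤ (Y.card : ℝ) →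
      ∃ u ∈ X, ∃ w ∈ Y, G.Adj u w) :=
  ⟨mul_card_le_card_neighborhood G (by omega) hC hratio,
    fun _ _ hXY => exists_adj_of_le_card G (by omega) (by linarith) hratio hXY⟩
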